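/- arXiv:2406.06831 — 2 statements merged into one kernel-verified Lean document; each statement's English description precedes it below -/
import Mathlib

section
/- Let v : ℝ → ℝ be twice continuously differentiable, 2π-periodic and everywhere positive, and define G : ℝ² → ℝ by G(w) = r²/v(θ)² whenever w = r·(cos θ, sin θ) with r > 0 (and G(0) = 0). Fix θ and let w = v(θ)·(cos θ, sin θ) be the point of the indicatrix in direction θ, and let T = v'(θ)·(cos θ, sin θ) + v(θ)·(−sin θ, cos θ) be the tangent vector to the indicatrix curve at w. Then the fundamental tensor g_w(u₁,u₂) := (1/2)·∂²/∂s∂t [G(w + s·u₁ + t·u₂)]|_{s=t=0} satisfies g_w(T, T) = 2·v'(θ)²/v(θ)² − v''(θ)/v(θ) + 1. -/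
/-! In the frame `(e_θ, e_θ^⊥)` the point `w + u T` has coordinates `(v + u v', u v)`, so for `u`
near `0` its polar radius is `√N(u)`, `N(u) = (v + u v')² + (u v)²`, and its polar angle is
`θ + φ(u)`, `φ(u) = arctan (u v / (v + u v'))`. Hence `G (w + u T) = N(u) / v(θ + φ(u))²` near `0`,
and `g_w(T,T)` is half the second derivative of this profile at `0`. The identity `N φ' = v²` keeps
the first derivative short; at `0` one has `φ = 0`, `φ' = 1`, `N = v²` and `N' = 2 v v'`. -/

/-- The fundamental tensor of `G = F²` at `w`, evaluated on `u₁, u₂`: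
`g_w(u₁,u₂) = (1/2) ∂²/∂s∂t [G(w + s u₁ + t u₂)] |_{s=t=0}`. -/
noncomputable def fundTensor (G : ℝ × ℝ → ℝ) (w u₁ u₂ : ℝ × ℝ) : ℝ :=
  (1 / 2) * deriv (fun s : ℝ => deriv (fun t : ℝ => G (w + s • u₁ + t • u₂)) 0) 0

open Real Topology

theorem fundTensor_self (G : ℝ × ℝ → ℝ) (w u : ℝ × ℝ) :
    fundTensor G w u u = (1 / 2) * deriv (deriv fun t : ℝ => G (w + t • u)) 0 := by
  have h : ∀ s : ℝ, (fun t : ℝ => G (w + s • u + t • u)) = fun t => G (w + (s + t) • u) := by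
    intro s; funext t; rw [add_smul, add_assoc]
  simp only [fundTensor, h, deriv_comp_const_add (fun t => G (w + t • u)), add_zero]

theorem deriv_deriv_eq_of_eventually_hasDerivAt {f f' : ℝ → ℝ} {x c : ℝ}
    (hf : ∀ᶠ u in 𝓝 x, HasDerivAt f (f' u) u) (hf' : HasDerivAt f' c x) :
    deriv (deriv f) x = c := by
  have h : deriv f =ᶠ[𝓝 x] f' := hf.mono fun _ hu => hu.deriv
  rw [h.deriv_eq, hf'.deriv]

theorem sqrt_sq_add_sq_eq_mul_sqrt_one_add {x : ℝ} (y : ℝ) (hx : 0 < x) :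
    √(x ^ 2 + y ^ 2) = x * √(1 + (y / x) ^ 2) := by
  rw [← sqrt_sq hx.le, ← sqrt_mul (sq_nonneg x), sqrt_sq hx.le]
  congr 1
  field_simp

theorem sqrt_sq_add_sq_mul_cos_arctan_div {x : ℝ} (y : ℝ) (hx : 0 < x) :
    √(x ^ 2 + y ^ 2) * cos (arctan (y / x)) = x := by
  rw [cos_arctan, sqrt_sq_add_sq_eq_mul_sqrt_one_add y hx]
  field_simp

theorem sqrt_sq_add_sq_mul_sin_arctan_div {x : ℝ} (y : ℝ) (hx : 0 < x) :
    √(x ^ 2 + y ^ 2) * sin (arctan (y / x)) = y := by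
  rw [sin_arctan, sqrt_sq_add_sq_eq_mul_sqrt_one_add y hx]
  field_simp

theorem smul_cos_sin_add_smul_neg_sin_cos (θ : ℝ) {x : ℝ} (y : ℝ) (hx : 0 < x) :
    x • ((cos θ, sin θ) : ℝ × ℝ) + y • ((-sin θ, cos θ) : ℝ × ℝ) =
      (√(x ^ 2 + y ^ 2) * cos (θ + arctan (y / x)),
        √(x ^ 2 + y ^ 2) * sin (θ + arctan (y / x))) := by
  have hc := sqrt_sq_add_sq_mul_cos_arctan_div y hx
  have hs := sqrt_sq_add_sq_mul_sin_arctan_div y hx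
  rw [cos_add, sin_add]
  ext <;> simp only [Prod.fst_add, Prod.snd_add, Prod.smul_mk, smul_eq_mul]
  · linear_combination -cos θ * hc + sin θ * hs
  · linear_combination -sin θ * hc - cos θ * hs

section TangentLine

variable (a b : ℝ)

noncomputable def lineNormSq (u : ℝ) : ℝ := (a + u * b) ^ 2 + (u * a) ^ 2

noncomputable def lineAngle (u : ℝ) : ℝ := arctan (u * a / (a + u * b))

theorem lineNormSq_pos {u : ℝ} (hu : a + u * b ≠ 0) : 0 < lineNormSq a b u := by
  unfold lineNormSq; positivity

theorem hasDerivAt_lineNormSq (u : ℝ) :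
    HasDerivAt (lineNormSq a b) (2 * b * (a + u * b) + 2 * u * a ^ 2) u := by
  have h : HasDerivAt (lineNormSq a b) _ u :=
    ((((hasDerivAt_id' u).mul_const b).const_add a).pow 2).add
      (((hasDerivAt_id' u).mul_const a).pow 2)
  convert h using 1
  norm_num
  ring

theorem hasDerivAt_lineAngle {u : ℝ} (hu : a + u * b ≠ 0) :
    HasDerivAt (lineAngle a b) (a ^ 2 / lineNormSq a b u) u := by
  have hq : HasDerivAt (fun y => y * a / (a + y * b))
      ((1 * a * (a + u * b) - u * a * (1 * b)) / (a + u * b) ^ 2) u :=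
    ((hasDerivAt_id' u).mul_const a).div (((hasDerivAt_id' u).mul_const b).const_add a) hu
  have h : HasDerivAt (lineAngle a b) _ u := hq.arctan
  convert h using 1
  have := lineNormSq_pos a b hu
  unfold lineNormSq at *
  field_simp
  ring

variable (v : ℝ → ℝ) (θ : ℝ)

noncomputable def lineProfile (u : ℝ) : ℝ := lineNormSq a b u / v (θ + lineAngle a b u) ^ 2

noncomputable def lineProfileDeriv (u : ℝ) : ℝ :=
  (2 * b * (a + u * b) + 2 * u * a ^ 2) / v (θ + lineAngle a b u) ^ 2
    - 2 * a ^ 2 * deriv v (θ + lineAngle a b u) / v (θ + lineAngle a b u) ^ 3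

theorem apply_add_smul_eq_lineProfile {G : ℝ × ℝ → ℝ}
    (hG : ∀ r θ : ℝ, 0 < r → G (r * cos θ, r * sin θ) = r ^ 2 / (v θ) ^ 2)
    {u : ℝ} (hu : 0 < a + u * b) :
    G (a • ((cos θ, sin θ) : ℝ × ℝ) + u • (b • ((cos θ, sin θ) : ℝ × ℝ)
        + a • ((-sin θ, cos θ) : ℝ × ℝ))) =
      lineProfile a b v θ u := by
  have hN := lineNormSq_pos a b hu.ne'
  have hline : a • ((cos θ, sin θ) : ℝ × ℝ) + u • (b • ((cos θ, sin θ) : ℝ × ℝ)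
      + a • ((-sin θ, cos θ) : ℝ × ℝ)) =
      (a + u * b) • ((cos θ, sin θ) : ℝ × ℝ) + (u * a) • ((-sin θ, cos θ) : ℝ × ℝ) := by
    module
  rw [hline, smul_cos_sin_add_smul_neg_sin_cos θ _ hu]
  exact (hG _ _ (sqrt_pos.2 hN)).trans (by rw [sq_sqrt hN.le]; rfl)

theorem hasDerivAt_lineProfile {u : ℝ} (hu : a + u * b ≠ 0)
    (hv : DifferentiableAt ℝ v (θ + lineAngle a b u)) (hv0 : v (θ + lineAngle a b u) ≠ 0) :
    HasDerivAt (lineProfile a b v θ) (lineProfileDeriv a b v θ u) u := by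
  have hV : HasDerivAt (fun u => v (θ + lineAngle a b u))
      (deriv v (θ + lineAngle a b u) * (a ^ 2 / lineNormSq a b u)) u :=
    hv.hasDerivAt.comp u ((hasDerivAt_lineAngle a b hu).const_add θ)
  have h : HasDerivAt (lineProfile a b v θ) _ u :=
    (hasDerivAt_lineNormSq a b u).div (hV.pow 2) (pow_ne_zero 2 hv0)
  convert h using 1
  have := lineNormSq_pos a b hu
  unfold lineProfileDeriv
  field_simp
  ring

end TangentLine

theorem hasDerivAt_lineProfileDeriv_zero {v : ℝ → ℝ} {θ : ℝ} (hv : DifferentiableAt ℝ v θ)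
    (hdv : DifferentiableAt ℝ (deriv v) θ) (hv0 : v θ ≠ 0) :
    HasDerivAt (lineProfileDeriv (v θ) (deriv v θ) v θ)
      (4 * deriv v θ ^ 2 / v θ ^ 2 + 2 - 2 * deriv (deriv v) θ / v θ) 0 := by
  set a := v θ with ha
  set b := deriv v θ with hb
  have hφ0 : θ + lineAngle a b 0 = θ := by simp [lineAngle]
  have hφ : HasDerivAt (fun u => θ + lineAngle a b u) 1 0 := by
    have hN0 : lineNormSq a b 0 = a ^ 2 := by simp [lineNormSq]
    refine ((hasDerivAt_lineAngle a b (u := 0) (by simpa)).const_add θ).congr_deriv ?_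
    rw [hN0, div_self (pow_ne_zero 2 hv0)]
  have hV : HasDerivAt (fun u => v (θ + lineAngle a b u)) (b * 1) 0 :=
    hv.hasDerivAt.comp_of_eq 0 hφ hφ0.symm
  have hW : HasDerivAt (fun u => deriv v (θ + lineAngle a b u)) (deriv (deriv v) θ * 1) 0 :=
    hdv.hasDerivAt.comp_of_eq 0 hφ hφ0.symm
  have hnum : HasDerivAt (fun u : ℝ => 2 * b * (a + u * b) + 2 * u * a ^ 2)
      (2 * b * b + 2 * a ^ 2) 0 := by
    have h := (((hasDerivAt_id' (0 : ℝ)).mul_const b).const_add a).const_mul (2 * b) |>.add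
      (((hasDerivAt_id' (0 : ℝ)).const_mul 2).mul_const (a ^ 2))
    exact h.congr_deriv (by ring)
  have hV0 : v (θ + lineAngle a b 0) ≠ 0 := by rwa [hφ0]
  have h := (hnum.div (hV.pow 2) (pow_ne_zero 2 hV0)).sub
    ((hW.const_mul (2 * a ^ 2)).div (hV.pow 3) (pow_ne_zero 3 hV0))
  refine h.congr_deriv ?_
  simp only [Pi.pow_apply, hφ0, ← ha, ← hb]
  field_simp
  ring

theorem fundTensor_tangent_tangent_general
    (v : ℝ → ℝ) (hv : ContDiff ℝ 2 v)
    (hpos : ∀ θ, 0 < v θ) (G : ℝ × ℝ → ℝ)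
    (hG : ∀ r θ : ℝ, 0 < r → G (r * Real.cos θ, r * Real.sin θ) = r ^ 2 / (v θ) ^ 2) :
    ∀ θ : ℝ,
      fundTensor G (v θ • ((Real.cos θ, Real.sin θ) : ℝ × ℝ))
        (deriv v θ • ((Real.cos θ, Real.sin θ) : ℝ × ℝ)
          + v θ • ((-Real.sin θ, Real.cos θ) : ℝ × ℝ))
        (deriv v θ • ((Real.cos θ, Real.sin θ) : ℝ × ℝ)
          + v θ • ((-Real.sin θ, Real.cos θ) : ℝ × ℝ)) =
        2 * (deriv v θ) ^ 2 / (v θ) ^ 2 - deriv (deriv v) θ / v θ + 1 := by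
  intro θ
  have hnear : ∀ᶠ u in 𝓝 (0 : ℝ), 0 < v θ + u * deriv v θ := by
    have hcont : Continuous fun u : ℝ => v θ + u * deriv v θ := by fun_prop
    exact continuousAt_const.eventually_lt hcont.continuousAt (by simpa using hpos θ)
  rw [fundTensor_self, deriv_deriv_eq_of_eventually_hasDerivAt ?_
    (hasDerivAt_lineProfileDeriv_zero (hv.differentiable two_ne_zero θ)
      (hv.differentiable_deriv_two θ) (hpos θ).ne')]
  · field_simp [(hpos θ).ne']
    ring
  · filter_upwards [hnear.eventually_nhds, hnear] with u hline hu
    exact (hasDerivAt_lineProfile _ _ v θ hu.ne' (hv.differentiable two_ne_zero _)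
      (hpos _).ne').congr_of_eventuallyEq
        (hline.mono fun t ht => apply_add_smul_eq_lineProfile _ _ v θ hG ht)

/-- At the indicatrix point `w = v(θ)(cos θ, sin θ)`, the tangent
vector `T = v'(θ)(cos θ, sin θ) + v(θ)(−sin θ, cos θ)` of the indicatrix satisfies
`g_w(T,T) = 2 v'(θ)²/v(θ)² − v''(θ)/v(θ) + 1`. -/
theorem fundTensor_tangent_tangent
    (v : ℝ → ℝ) (hv : ContDiff ℝ 2 v) (hper : ∀ θ, v (θ + 2 * Real.pi) = v θ)
    (hpos : ∀ θ, 0 < v θ) (G : ℝ × ℝ → ℝ)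
    (hG : ∀ r θ : ℝ, 0 < r → G (r * Real.cos θ, r * Real.sin θ) = r ^ 2 / (v θ) ^ 2)
    (hG0 : G 0 = 0) :
    ∀ θ : ℝ,
      fundTensor G (v θ • ((Real.cos θ, Real.sin θ) : ℝ × ℝ))
        (deriv v θ • ((Real.cos θ, Real.sin θ) : ℝ × ℝ)
          + v θ • ((-Real.sin θ, Real.cos θ) : ℝ × ℝ))
        (deriv v θ • ((Real.cos θ, Real.sin θ) : ℝ × ℝ)
          + v θ • ((-Real.sin θ, Real.cos θ) : ℝ × ℝ)) =
        2 * (deriv v θ) ^ 2 / (v θ) ^ 2 - deriv (deriv v) θ / v θ + 1 :=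
  fundTensor_tangent_tangent_general v hv hpos G hG
end

section
/- Let a, b ∈ ℝ with a ≠ 0 and b ≠ 0, h(φ) = |cos φ|³/|a|³ + sin²φ/b², and u(θ) = √(h(θ/2)). Then for every θ ∈ ℝ, writing φ = θ/2, one has the identity u''(θ) + u(θ) = [ 3·sin⁴φ/b⁴ + (1/(|a|³·b²))·( 3·|cos φ|·sin⁴φ + (17/2)·|cos φ|³·sin²φ + |cos φ|⁵ ) + (1/a⁶)·( (3/4)·cos⁴φ·sin²φ + (5/2)·cos⁶φ ) ] / ( 4·h(φ)^{3/2} ). -/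
open Real Asymptotics

/-! For `u(θ) = √(g(θ/c))` with `g > 0`, the chain and quotient rules give
`u'' + u = ((2 g g'' - g'²)/c² + 4 g²) / (4 g^{3/2})`, evaluated at `θ/c`. The only non-smooth
ingredient of `h` is `|cos φ|³`, which is still twice differentiable because `y ↦ y |y|` has
derivative `2 |y|`. With `g = h` and `c = 2` the numerator is a polynomial identity in
`sin φ`, `cos φ` and `|cos φ|`, checked separately on `cos φ ≥ 0` and `cos φ < 0`. -/

lemma hasDerivAt_mul_abs (x : ℝ) : HasDerivAt (fun y : ℝ => y * |y|) (2 * |x|) x := by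
  rcases eq_or_ne x 0 with rfl | hx
  · rw [hasDerivAt_iff_isLittleO_nhds_zero]
    simpa using (isBigO_of_le _ fun y => by simp [sq]).trans_isLittleO (isLittleO_pow_id one_lt_two)
  · refine ((hasDerivAt_id x).mul (hasDerivAt_abs hx)).congr_deriv ?_
    rw [id, self_mul_sign]
    ring

lemma hasDerivAt_abs_pow_three (x : ℝ) : HasDerivAt (fun y : ℝ => |y| ^ 3) (3 * x * |x|) x := by
  have h : (fun y : ℝ => |y| ^ 3) = fun y => y * (y * |y|) :=
    funext fun y => by rw [pow_succ, sq_abs]; ring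
  rw [h]
  exact ((hasDerivAt_id x).mul (hasDerivAt_mul_abs x)).congr_deriv (by rw [id]; ring)

theorem deriv_deriv_sqrt_comp_div_const_add {g g' g'' : ℝ → ℝ} (c : ℝ)
    (hg : ∀ x, HasDerivAt g (g' x) x) (hg' : ∀ x, HasDerivAt g' (g'' x) x)
    (hpos : ∀ x, 0 < g x) (θ : ℝ) :
    deriv (deriv fun t => √(g (t / c))) θ + √(g (θ / c)) =
      ((2 * g (θ / c) * g'' (θ / c) - g' (θ / c) ^ 2) / c ^ 2 + 4 * g (θ / c) ^ 2) /
        (4 * g (θ / c) ^ ((3 : ℝ) / 2)) := by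
  have hdiv : ∀ t, HasDerivAt (fun t => t / c) c⁻¹ t := fun t => by
    simpa using (hasDerivAt_id t).div_const c
  have hsqrt : ∀ t,
      HasDerivAt (fun t => √(g (t / c))) (g' (t / c) * c⁻¹ / (2 * √(g (t / c)))) t :=
    fun t => ((hg _).comp t (hdiv t)).sqrt (hpos _).ne'
  have hsqrt_ne : √(g (θ / c)) ≠ 0 := (sqrt_pos.2 (hpos _)).ne'
  have hderiv2 : HasDerivAt (fun t => g' (t / c) * c⁻¹ / (2 * √(g (t / c)))) _ θ :=
    (((hg' _).comp θ (hdiv θ)).mul_const c⁻¹).div ((hsqrt θ).const_mul 2)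
      (mul_ne_zero two_ne_zero hsqrt_ne)
  rw [funext fun t => (hsqrt t).deriv, hderiv2.deriv, Function.comp_apply,
    rpow_div_two_eq_sqrt _ (hpos _).le, rpow_ofNat]
  set S := √(g (θ / c))
  rw [show g (θ / c) = S ^ 2 from (sq_sqrt (hpos _).le).symm]
  field_simp
  ring

noncomputable section Gielis

variable (A B : ℝ)

def gielisH (φ : ℝ) : ℝ := |cos φ| ^ 3 / A + sin φ ^ 2 / B

def gielisHDeriv (φ : ℝ) : ℝ := -3 * sin φ * (cos φ * |cos φ|) / A + 2 * sin φ * cos φ / B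

def gielisHDeriv2 (φ : ℝ) : ℝ :=
  (6 * sin φ ^ 2 * |cos φ| - 3 * |cos φ| ^ 3) / A + 2 * (cos φ ^ 2 - sin φ ^ 2) / B

lemma hasDerivAt_gielisH (φ : ℝ) : HasDerivAt (gielisH A B) (gielisHDeriv A B φ) φ := by
  refine (((hasDerivAt_abs_pow_three _).comp φ (hasDerivAt_cos φ)).div_const A |>.add
    (((hasDerivAt_sin φ).pow 2).div_const B)).congr_deriv ?_
  simp only [gielisHDeriv]
  ring

lemma hasDerivAt_gielisHDeriv (φ : ℝ) :
    HasDerivAt (gielisHDeriv A B) (gielisHDeriv2 A B φ) φ := by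
  have hcos_mul_abs : HasDerivAt (fun x => cos x * |cos x|) (2 * |cos φ| * -sin φ) φ :=
    (hasDerivAt_mul_abs _).comp φ (hasDerivAt_cos φ)
  refine ((((hasDerivAt_sin φ).const_mul (-3)).mul hcos_mul_abs).div_const A |>.add
    ((((hasDerivAt_sin φ).const_mul 2).mul (hasDerivAt_cos φ)).div_const B)).congr_deriv ?_
  rw [gielisHDeriv2, pow_succ |cos φ|, sq_abs]
  ring

variable {A B} in
lemma gielisH_pos (hA : 0 < A) (hB : 0 < B) (φ : ℝ) : 0 < gielisH A B φ := by
  rcases eq_or_ne (cos φ) 0 with hcos | hcos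
  · have hsin : sin φ ^ 2 = 1 := by simpa [hcos] using sin_sq_add_cos_sq φ
    rw [gielisH, hsin]
    exact add_pos_of_nonneg_of_pos (div_nonneg (by positivity) hA.le) (one_div_pos.2 hB)
  · exact add_pos_of_pos_of_nonneg (div_pos (pow_pos (abs_pos.2 hcos) 3) hA)
      (div_nonneg (sq_nonneg _) hB.le)

lemma gielisH_numerator_eq (φ : ℝ) :
    (2 * gielisH A B φ * gielisHDeriv2 A B φ - gielisHDeriv A B φ ^ 2) / 2 ^ 2
        + 4 * gielisH A B φ ^ 2 =
      3 * sin φ ^ 4 / B ^ 2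
        + (1 / (A * B)) *
            (3 * |cos φ| * sin φ ^ 4 + (17 / 2) * |cos φ| ^ 3 * sin φ ^ 2 + |cos φ| ^ 5)
        + (1 / A ^ 2) * ((3 / 4) * cos φ ^ 4 * sin φ ^ 2 + (5 / 2) * cos φ ^ 6) := by
  simp only [gielisH, gielisHDeriv, gielisHDeriv2]
  rcases abs_cases (cos φ) with ⟨habs, -⟩ | ⟨habs, -⟩ <;> rw [habs] <;> ring

end Gielis

/-- With `h(φ) = |cos φ|³/|a|³ + sin²φ/b²` and `u(θ) = √(h(θ/2))`,
for every `θ` (writing `φ = θ/2`):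
`u''(θ) + u(θ) = [3 sin⁴φ/b⁴ + (1/(|a|³ b²))(3 |cos φ| sin⁴φ + (17/2)|cos φ|³ sin²φ + |cos φ|⁵)
  + (1/a⁶)((3/4) cos⁴φ sin²φ + (5/2) cos⁶φ)] / (4 h(φ)^{3/2})`. -/
theorem gielis_u_second_derivative_identity (a b : ℝ) (ha : a ≠ 0) (hb : b ≠ 0)
    (h u : ℝ → ℝ)
    (hh : ∀ φ, h φ = |Real.cos φ| ^ 3 / |a| ^ 3 + Real.sin φ ^ 2 / b ^ 2)
    (hu : ∀ θ, u θ = Real.sqrt (h (θ / 2))) :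
    ∀ θ : ℝ,
      deriv (deriv u) θ + u θ =
        (3 * Real.sin (θ / 2) ^ 4 / b ^ 4
          + (1 / (|a| ^ 3 * b ^ 2)) *
              (3 * |Real.cos (θ / 2)| * Real.sin (θ / 2) ^ 4
                + (17 / 2) * |Real.cos (θ / 2)| ^ 3 * Real.sin (θ / 2) ^ 2
                + |Real.cos (θ / 2)| ^ 5)
          + (1 / a ^ 6) *
              ((3 / 4) * Real.cos (θ / 2) ^ 4 * Real.sin (θ / 2) ^ 2
                + (5 / 2) * Real.cos (θ / 2) ^ 6))
        / (4 * h (θ / 2) ^ ((3 : ℝ) / 2)) := by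
  intro θ
  obtain rfl : h = gielisH (|a| ^ 3) (b ^ 2) := funext hh
  obtain rfl : u = fun t => √(gielisH (|a| ^ 3) (b ^ 2) (t / 2)) := funext hu
  rw [deriv_deriv_sqrt_comp_div_const_add 2 (hasDerivAt_gielisH _ _) (hasDerivAt_gielisHDeriv _ _)
    (gielisH_pos (by positivity) (by positivity)) θ, gielisH_numerator_eq,
    ← pow_mul, ← pow_mul, Even.pow_abs ⟨3, rfl⟩]
end
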